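/- Let G be a graph on n vertices with unit edge weights and G^c its complement. Then for every rooted binary tree T with leaves V, cost_G(T) + cost_{G^c}(T) = (n^3 − n)/3. Consequently, a tree maximizes cost_G if and only if it minimizes cost_{G^c}. -/

import Mathlib

open Finset

/-- A rooted binary tree whose leaves are labeled by elements of `Fin n`. -/
inductive HTree (n : ℕ) : Type where
  | leaf : Fin n → HTree n
  | node : HTree n → HTree n → HTree n

namespace HTree

variable {n : ℕ}

/-- The list of leaf labels, left to right. -/
def leafList : HTree n → List (Fin n)
  | .leaf v => [v]
  | .node l r => l.leafList ++ r.leafList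

/-- The set of leaf labels of a tree. -/
def leaves (T : HTree n) : Finset (Fin n) := T.leafList.toFinset

/-- `T` is a hierarchical clustering tree of the whole vertex set `Fin n`:
its leaves are in one-to-one correspondence with `Fin n`. -/
def IsFullTree (T : HTree n) : Prop := T.leafList.Nodup ∧ T.leaves = Finset.univ

/-- `|leaves(T[i ∨ j])|`: the number of leaves of the subtree rooted at the
lowest common ancestor of leaves `i` and `j`. -/
def lcaSize : HTree n → Fin n → Fin n → ℕ
  | .leaf _, _, _ => 1
  | .node l r, i, j =>
    if i ∈ l.leaves ∧ j ∈ l.leaves then l.lcaSize i j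
    else if i ∈ r.leaves ∧ j ∈ r.leaves then r.lcaSize i j
    else (l.leaves ∪ r.leaves).card

/-- `cost_G(T) = Σ_{{i,j}} w_{ij} |leaves(T[i ∨ j])|`, the sum being over
unordered pairs (represented as ordered pairs `p.1 < p.2`). -/
def pairCost (w : Fin n → Fin n → ℝ) (T : HTree n) : ℝ :=
  ∑ p ∈ Finset.univ.filter (fun p : Fin n × Fin n => p.1 < p.2),
    w p.1 p.2 * (T.lcaSize p.1 p.2 : ℝ)

/-- `w(A, B)`: total weight of edges between `A` and `B`. -/
def cut (w : Fin n → Fin n → ℝ) (A B : Finset (Fin n)) : ℝ :=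
  ∑ i ∈ A, ∑ j ∈ B, w i j

/-- The sum-of-splits formulation of the cost:
`Σ over internal splits S → (S₁,S₂) of |S| ⬝ w(S₁,S₂)`. -/
def splitCost (w : Fin n → Fin n → ℝ) : HTree n → ℝ
  | .leaf _ => 0
  | .node l r =>
      ((l.leaves ∪ r.leaves).card : ℝ) * cut w l.leaves r.leaves
        + splitCost w l + splitCost w r

/-- `Subtree t T`: `t` occurs as a subtree of `T`. -/
inductive Subtree : HTree n → HTree n → Prop
  | refl (t : HTree n) : Subtree t t
  | left {t l r : HTree n} : Subtree t l → Subtree t (.node l r)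
  | right {t l r : HTree n} : Subtree t r → Subtree t (.node l r)

end HTree

/-! For `i ≠ j` exactly one of the weights of `G` and of `G^c` is `1`, so the two costs add up
to the cost of the complete graph, `Σ_{i<j} |leaves(T[i ∨ j])|`. That cost does not depend on
`T`: over ordered pairs, a node splitting `a + b` leaves into `a` and `b` contributes
`2ab(a + b)`, and by induction on the tree these contributions add up to `2(n³ - n)/3`.
Since the sum of the two costs is constant, maximizers of one are the minimizers of the other. -/

theorem Finset.sum_offDiag_union {α M : Type*} [DecidableEq α] [AddCommMonoid M]
    {s t : Finset α} (h : Disjoint s t) (f : α × α → M) :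
    ∑ p ∈ (s ∪ t).offDiag, f p
      = ∑ p ∈ s.offDiag, f p + ∑ p ∈ t.offDiag, f p + ∑ p ∈ s ×ˢ t, f p
        + ∑ p ∈ t ×ˢ s, f p := by
  have h' := disjoint_left.1 h
  rw [offDiag_union h, sum_union, sum_union, sum_union] <;>
    simp only [disjoint_left, mem_union, mem_offDiag, mem_product] <;> grind

theorem Finset.sum_offDiag_eq_two_nsmul_sum_lt {α M : Type*} [Fintype α] [LinearOrder α]
    [AddCommMonoid M] (f : α → α → M) (hf : ∀ i j, f i j = f j i) :
    ∑ p ∈ (univ : Finset α).offDiag, f p.1 p.2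
      = 2 • ∑ p ∈ univ.filter (fun p : α × α => p.1 < p.2), f p.1 p.2 := by
  have hsplit : (univ : Finset α).offDiag
      = univ.filter (fun p : α × α => p.1 < p.2) ∪ univ.filter (fun p : α × α => p.2 < p.1) := by
    ext p
    simp
  have hswap : ∑ p ∈ univ.filter (fun p : α × α => p.2 < p.1), f p.1 p.2
      = ∑ p ∈ univ.filter (fun p : α × α => p.1 < p.2), f p.1 p.2 :=
    sum_nbij' Prod.swap Prod.swap (by simp) (by simp) (by simp) (by simp) fun p _ => hf _ _
  rw [hsplit, sum_union (disjoint_filter.2 fun p _ h => h.not_gt), hswap, two_nsmul]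

namespace HTree

variable {n : ℕ}

@[simp]
lemma leaves_leaf (v : Fin n) : (leaf v).leaves = {v} := by
  simp [leaves, leafList]

@[simp]
lemma leaves_node (l r : HTree n) : (node l r).leaves = l.leaves ∪ r.leaves := by
  simp [leaves, leafList]

lemma disjoint_leaves_of_nodup {l r : HTree n} (h : (node l r).leafList.Nodup) :
    Disjoint l.leaves r.leaves :=
  List.disjoint_toFinset_iff_disjoint.2 (List.disjoint_of_nodup_append h)

lemma lcaSize_comm (T : HTree n) (i j : Fin n) : T.lcaSize i j = T.lcaSize j i := by
  induction T with
  | leaf v => rfl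
  | node l r ihl ihr => simp only [lcaSize, ihl, ihr, and_comm]

section node

variable {l r : HTree n} {i j : Fin n}

lemma lcaSize_node_of_mem_left (hi : i ∈ l.leaves) (hj : j ∈ l.leaves) :
    (node l r).lcaSize i j = l.lcaSize i j := by
  simp [lcaSize, hi, hj]

lemma lcaSize_node_of_mem_right (h : Disjoint l.leaves r.leaves) (hi : i ∈ r.leaves)
    (hj : j ∈ r.leaves) : (node l r).lcaSize i j = r.lcaSize i j := by
  simp [lcaSize, hi, hj, disjoint_right.1 h hi]

lemma lcaSize_node_of_mem_left_of_mem_right (h : Disjoint l.leaves r.leaves)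
    (hi : i ∈ l.leaves) (hj : j ∈ r.leaves) :
    (node l r).lcaSize i j = #(l.leaves ∪ r.leaves) := by
  simp [lcaSize, disjoint_right.1 h hj, disjoint_left.1 h hi]

end node

theorem sum_offDiag_lcaSize (T : HTree n) (h : T.leafList.Nodup) :
    ∑ p ∈ T.leaves.offDiag, (T.lcaSize p.1 p.2 : ℝ)
      = 2 * ((#T.leaves : ℝ) ^ 3 - #T.leaves) / 3 := by
  induction T with
  | leaf v => simp
  | node l r ihl ihr =>
    have hd := disjoint_leaves_of_nodup h
    obtain ⟨hl, hr, -⟩ := List.nodup_append'.1 h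
    have hll : ∀ p ∈ l.leaves.offDiag, ((node l r).lcaSize p.1 p.2 : ℝ) = l.lcaSize p.1 p.2 :=
      fun p hp => by rw [lcaSize_node_of_mem_left (mem_offDiag.1 hp).1 (mem_offDiag.1 hp).2.1]
    have hrr : ∀ p ∈ r.leaves.offDiag, ((node l r).lcaSize p.1 p.2 : ℝ) = r.lcaSize p.1 p.2 :=
      fun p hp => by rw [lcaSize_node_of_mem_right hd (mem_offDiag.1 hp).1 (mem_offDiag.1 hp).2.1]
    have hlr : ∀ p ∈ l.leaves ×ˢ r.leaves,
        ((node l r).lcaSize p.1 p.2 : ℝ) = #(l.leaves ∪ r.leaves) := fun p hp => by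
      rw [lcaSize_node_of_mem_left_of_mem_right hd (mem_product.1 hp).1 (mem_product.1 hp).2]
    have hrl : ∀ p ∈ r.leaves ×ˢ l.leaves,
        ((node l r).lcaSize p.1 p.2 : ℝ) = #(l.leaves ∪ r.leaves) := fun p hp => by
      rw [lcaSize_comm,
        lcaSize_node_of_mem_left_of_mem_right hd (mem_product.1 hp).2 (mem_product.1 hp).1]
    rw [leaves_node, sum_offDiag_union hd, sum_congr rfl hll, sum_congr rfl hrr,
      sum_congr rfl hlr, sum_congr rfl hrl, ihl hl, ihr hr]
    simp only [sum_const, card_product, card_union_of_disjoint hd, nsmul_eq_mul]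
    push_cast
    ring

lemma pairCost_add (w₁ w₂ : Fin n → Fin n → ℝ) (T : HTree n) :
    T.pairCost w₁ + T.pairCost w₂ = T.pairCost (w₁ + w₂) := by
  simp only [pairCost, ← sum_add_distrib, Pi.add_apply, add_mul]

lemma pairCost_congr {w₁ w₂ : Fin n → Fin n → ℝ} (h : ∀ i j, i < j → w₁ i j = w₂ i j)
    (T : HTree n) : T.pairCost w₁ = T.pairCost w₂ :=
  sum_congr rfl fun p hp => by rw [h _ _ (mem_filter.1 hp).2]

theorem IsFullTree.pairCost_one {T : HTree n} (hT : T.IsFullTree) :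
    T.pairCost (fun _ _ => 1) = ((n : ℝ) ^ 3 - n) / 3 := by
  have h := sum_offDiag_lcaSize T hT.1
  rw [hT.2, card_univ, Fintype.card_fin,
    sum_offDiag_eq_two_nsmul_sum_lt (fun i j => (T.lcaSize i j : ℝ))
      fun i j => by rw [lcaSize_comm], two_nsmul] at h
  simp only [pairCost, one_mul]
  linarith

end HTree

/-- For a unit-weight graph `G` and its complement `G^c`,
`cost_G(T) + cost_{G^c}(T) = (n³ - n)/3` for every full tree `T`; consequently a
tree maximizes `cost_G` (over full trees) iff it minimizes `cost_{G^c}`. -/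
theorem complement_cost (n : ℕ) (G : SimpleGraph (Fin n)) [DecidableRel G.Adj] :
    (∀ T : HTree n, T.IsFullTree →
      T.pairCost (fun i j => if G.Adj i j then 1 else 0)
        + T.pairCost (fun i j => if i ≠ j ∧ ¬ G.Adj i j then 1 else 0)
      = ((n : ℝ) ^ 3 - n) / 3) ∧
    (∀ T₀ : HTree n, T₀.IsFullTree →
      ((∀ T : HTree n, T.IsFullTree →
          T.pairCost (fun i j => if G.Adj i j then 1 else 0)
            ≤ T₀.pairCost (fun i j => if G.Adj i j then 1 else 0)) ↔
       (∀ T : HTree n, T.IsFullTree →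
          T₀.pairCost (fun i j => if i ≠ j ∧ ¬ G.Adj i j then 1 else 0)
            ≤ T.pairCost (fun i j => if i ≠ j ∧ ¬ G.Adj i j then 1 else 0)))) := by
  have total : ∀ T : HTree n, T.IsFullTree →
      T.pairCost (fun i j => if G.Adj i j then 1 else 0)
        + T.pairCost (fun i j => if i ≠ j ∧ ¬ G.Adj i j then 1 else 0)
      = ((n : ℝ) ^ 3 - n) / 3 := fun T hT => by
    rw [T.pairCost_add, ← hT.pairCost_one]
    refine HTree.pairCost_congr (fun i j hij => ?_) T
    by_cases hadj : G.Adj i j <;> simp [hadj, hij.ne]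
  refine ⟨total, fun T₀ hT₀ => forall₂_congr fun T hT => ?_⟩
  have := total T hT
  have := total T₀ hT₀
  constructor <;> intro <;> linarith
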